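/- arXiv:1407.0819 — 5 statements merged into one kernel-verified Lean document; each statement's English description precedes it below -/
import Mathlib

section
/- Let S = (x_n)_{n≥0} be a sequence in [0,1] and let P = {(x_n, n/N) : 0 ≤ n < N} ⊆ [0,1]^2. Then max_{1 ≤ M ≤ N} D*(M,S) ≤ D*(N,P) ≤ max_{1 ≤ M ≤ N} D*(M,S) + 1, where D*(M,S) is the star discrepancy of the first M terms of S and D*(N,P) is the (unnormalized) two-dimensional star discrepancy of P. -/
noncomputable section

/-- Unnormalized star discrepancy of the first `N` terms of a sequence in `[0,1]`. -/
def starDisc (N : ℕ) (x : ℕ → ℝ) : ℝ :=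
  ⨆ α : {a : ℝ // 0 < a ∧ a ≤ 1},
    |(((Finset.range N).filter (fun n => x n < α.1)).card : ℝ) - N * α.1|

/-- Unnormalized two-dimensional star discrepancy of the `N` points `P 0, ..., P (N-1)`. -/
def starDisc2 (N : ℕ) (P : ℕ → ℝ × ℝ) : ℝ :=
  ⨆ α : {a : ℝ // 0 < a ∧ a ≤ 1} × {a : ℝ // 0 < a ∧ a ≤ 1},
    |(((Finset.range N).filter
        (fun n => (P n).1 < α.1.1 ∧ (P n).2 < α.2.1)).card : ℝ)
      - N * (α.1.1 * α.2.1)|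

instance : Nonempty {a : ℝ // 0 < a ∧ a ≤ 1} := ⟨⟨1, one_pos, le_refl 1⟩⟩

lemma bdd1 (M : ℕ) (x : ℕ → ℝ) :
    BddAbove (Set.range fun α : {a : ℝ // 0 < a ∧ a ≤ 1} =>
      |(((Finset.range M).filter (fun n => x n < α.1)).card : ℝ) - M * α.1|) := by
  refine ⟨2 * M, ?_⟩
  rintro _ ⟨α, rfl⟩
  obtain ⟨hα0, hα1⟩ := α.2
  have hc : (((Finset.range M).filter (fun n => x n < α.1)).card : ℝ) ≤ M := by
    exact_mod_cast (Finset.card_filter_le _ _).trans (le_of_eq (Finset.card_range M))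
  have hc0 : (0:ℝ) ≤ (((Finset.range M).filter (fun n => x n < α.1)).card : ℝ) :=
    Nat.cast_nonneg _
  have hM0 : (0:ℝ) ≤ M := Nat.cast_nonneg _
  rw [abs_sub_le_iff]
  constructor <;> nlinarith

lemma bdd2 (N : ℕ) (P : ℕ → ℝ × ℝ) :
    BddAbove (Set.range fun α : {a : ℝ // 0 < a ∧ a ≤ 1} × {a : ℝ // 0 < a ∧ a ≤ 1} =>
      |(((Finset.range N).filter
        (fun n => (P n).1 < α.1.1 ∧ (P n).2 < α.2.1)).card : ℝ)
      - N * (α.1.1 * α.2.1)|) := by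
  refine ⟨2 * N, ?_⟩
  rintro _ ⟨α, rfl⟩
  obtain ⟨ha0, ha1⟩ := α.1.2
  obtain ⟨hb0, hb1⟩ := α.2.2
  have hc : (((Finset.range N).filter
      (fun n => (P n).1 < α.1.1 ∧ (P n).2 < α.2.1)).card : ℝ) ≤ N := by
    exact_mod_cast (Finset.card_filter_le _ _).trans (le_of_eq (Finset.card_range N))
  have hc0 : (0:ℝ) ≤ (((Finset.range N).filter
      (fun n => (P n).1 < α.1.1 ∧ (P n).2 < α.2.1)).card : ℝ) := Nat.cast_nonneg _
  have hN0 : (0:ℝ) ≤ N := Nat.cast_nonneg _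
  have hab0 : (0:ℝ) ≤ α.1.1 * α.2.1 := by positivity
  have hab1 : α.1.1 * α.2.1 ≤ 1 := by nlinarith
  have := mul_le_mul_of_nonneg_left hab1 hN0
  rw [abs_sub_le_iff]
  constructor <;> nlinarith

theorem stmt1 (N : ℕ) (hN : 1 ≤ N) (x : ℕ → ℝ)
    (hx : ∀ n, x n ∈ Set.Icc (0 : ℝ) 1) :
    (Finset.Icc 1 N).sup' (Finset.nonempty_Icc.mpr hN) (fun M => starDisc M x)
        ≤ starDisc2 N (fun n => (x n, (n : ℝ) / N)) ∧
      starDisc2 N (fun n => (x n, (n : ℝ) / N))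
        ≤ (Finset.Icc 1 N).sup' (Finset.nonempty_Icc.mpr hN) (fun M => starDisc M x) + 1 := by
  have hN0 : (0:ℝ) < N := by exact_mod_cast hN
  constructor
  · apply Finset.sup'_le
    intro M hM
    obtain ⟨hM1, hMN⟩ := Finset.mem_Icc.mp hM
    apply ciSup_le
    intro α
    have hβ : (0:ℝ) < (M:ℝ)/N ∧ (M:ℝ)/N ≤ 1 := by
      constructor
      · positivity
      · rw [div_le_one hN0]; exact_mod_cast hMN
    have key : (Finset.range N).filter
        (fun n => ((fun n => (x n, (n : ℝ) / N)) n).1 < α.1 ∧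
          ((fun n => (x n, (n : ℝ) / N)) n).2 < (M:ℝ)/N)
        = (Finset.range M).filter (fun n => x n < α.1) := by
      ext n
      simp only [Finset.mem_filter, Finset.mem_range]
      have hdiv : (n:ℝ)/N < (M:ℝ)/N ↔ n < M := by
        rw [div_lt_div_iff_of_pos_right hN0, Nat.cast_lt]
      constructor
      · rintro ⟨_, h1, h2⟩; exact ⟨hdiv.mp h2, h1⟩
      · rintro ⟨h1, h2⟩; exact ⟨lt_of_lt_of_le h1 hMN, h2, hdiv.mpr h1⟩
    have heq : (M:ℝ) * α.1 = N * (α.1 * ((M:ℝ)/N)) := by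
      field_simp
    calc |(((Finset.range M).filter (fun n => x n < α.1)).card : ℝ) - M * α.1|
        = |(((Finset.range N).filter
            (fun n => ((fun n => (x n, (n : ℝ) / N)) n).1 < α.1 ∧
              ((fun n => (x n, (n : ℝ) / N)) n).2 < (M:ℝ)/N)).card : ℝ)
            - N * (α.1 * ((M:ℝ)/N))| := by rw [key, heq]
      _ ≤ starDisc2 N (fun n => (x n, (n : ℝ) / N)) :=
          le_ciSup (bdd2 N _) (α, ⟨(M:ℝ)/N, hβ⟩)
  · apply ciSup_le
    rintro ⟨α, β⟩
    obtain ⟨hβ0, hβ1⟩ := β.2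
    obtain ⟨hα0, hα1⟩ := α.2
    set M := ⌈(N:ℝ) * β.1⌉₊ with hMdef
    have hNβ0 : (0:ℝ) < (N:ℝ) * β.1 := by positivity
    have hM1 : 1 ≤ M := Nat.one_le_iff_ne_zero.mpr (by
      have := Nat.ceil_pos.mpr hNβ0; omega)
    have hMN : M ≤ N := by
      apply Nat.ceil_le.mpr
      nlinarith
    have hle : (N:ℝ) * β.1 ≤ M := Nat.le_ceil _
    have hlt : (M:ℝ) < (N:ℝ) * β.1 + 1 := Nat.ceil_lt_add_one (le_of_lt hNβ0)
    have key : (Finset.range N).filter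
        (fun n => ((fun n => (x n, (n : ℝ) / N)) n).1 < α.1 ∧
          ((fun n => (x n, (n : ℝ) / N)) n).2 < β.1)
        = (Finset.range M).filter (fun n => x n < α.1) := by
      ext n
      simp only [Finset.mem_filter, Finset.mem_range]
      have hdiv : (n:ℝ)/N < β.1 ↔ n < M := by
        rw [div_lt_iff₀ hN0, mul_comm, ← Nat.lt_ceil]
      constructor
      · rintro ⟨_, h1, h2⟩; exact ⟨hdiv.mp h2, h1⟩
      · rintro ⟨h1, h2⟩; exact ⟨lt_of_lt_of_le h1 hMN, h2, hdiv.mpr h1⟩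
    rw [key]
    have htri : |(((Finset.range M).filter (fun n => x n < α.1)).card : ℝ)
        - N * (α.1 * β.1)|
        ≤ |(((Finset.range M).filter (fun n => x n < α.1)).card : ℝ) - M * α.1|
          + |(M:ℝ) * α.1 - N * (α.1 * β.1)| := abs_sub_le _ _ _
    have h2 : |(M:ℝ) * α.1 - N * (α.1 * β.1)| ≤ 1 := by
      have heq : (M:ℝ) * α.1 - N * (α.1 * β.1) = α.1 * ((M:ℝ) - N * β.1) := by ring
      rw [heq, abs_of_nonneg (by nlinarith)]
      nlinarith
    have h3 : |(((Finset.range M).filter (fun n => x n < α.1)).card : ℝ) - M * α.1|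
        ≤ starDisc M x := le_ciSup (bdd1 M x) α
    have h4 : starDisc M x ≤ (Finset.Icc 1 N).sup' (Finset.nonempty_Icc.mpr hN)
        (fun M => starDisc M x) :=
      Finset.le_sup' (fun M => starDisc M x) (Finset.mem_Icc.mpr ⟨hM1, hMN⟩)
    linarith
end
end

section
/- For any base b ≥ 2 and any m ≥ 0, the Hammersley point set H_{b,m} = {(φ_b(n), n/b^m) : 0 ≤ n ≤ b^m − 1} is a (0,m,2)-net in base b: every interval J = [a_1 b^{-d_1}, (a_1+1) b^{-d_1}) × [a_2 b^{-d_2}, (a_2+1) b^{-d_2}) with d_1 + d_2 = m, d_i ≥ 0, 0 ≤ a_i < b^{d_i} contains exactly one point of H_{b,m}. -/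
/-!
Write `n = q bᵈ¹ + r` with `r < bᵈ¹`. Then `bᵈ¹ φ_b(n) = rev(r) + φ_b(q)`, where `rev(r) < bᵈ¹` is
`r` with its `d₁` digits reversed and `0 ≤ φ_b(q) < 1`; so the first coordinate lies in the
`a₁`-th interval of length `b^{-d₁}` iff `rev(r) = a₁`, while the second lies in the `a₂`-th
interval of length `b^{-d₂}` iff `q = a₂`. Digit reversal is a bijection of `[0, bᵈ¹)`, so exactly
one `n` qualifies.
-/

noncomputable section

/-- The `k`-th base-`b` digit of `n`. -/
def digit (b n k : ℕ) : ℕ := n / b ^ k % b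

/-- The base-`b` radical inverse `φ_b(n) = Σ_k n_k b^{-(k+1)}`. -/
def radInv (b n : ℕ) : ℝ := ∑' k : ℕ, (digit b n k : ℝ) / (b : ℝ) ^ (k + 1)

theorem le_div_and_lt_div_iff_floor_mul_eq {x B : ℝ} (hx : 0 ≤ x) (hB : 0 < B) (a : ℕ) :
    (a / B ≤ x ∧ x < (a + 1) / B) ↔ ⌊x * B⌋₊ = a := by
  rw [Nat.floor_eq_iff (by positivity), div_le_iff₀ hB, lt_div_iff₀ hB]

/-- The `d` lowest base-`b` digits of `n` in reverse order, so that
`revDigits b d n = bᵈ φ_b(n mod bᵈ)`. -/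
def revDigits (b : ℕ) : ℕ → ℕ → ℕ
  | 0, _ => 0
  | d + 1, n => n % b * b ^ d + revDigits b d (n / b)

section revDigits

variable {b : ℕ}

theorem revDigits_lt (hb : 0 < b) (d n : ℕ) : revDigits b d n < b ^ d := by
  induction d generalizing n with
  | zero => simp [revDigits]
  | succ d ih =>
    calc n % b * b ^ d + revDigits b d (n / b) < (n % b + 1) * b ^ d := by
          rw [add_one_mul]; exact Nat.add_lt_add_left (ih _) _
      _ ≤ b ^ (d + 1) := by
          rw [pow_succ']; exact Nat.mul_le_mul_right _ (Nat.mod_lt _ hb)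

theorem revDigits_injOn (hb : 0 < b) (d : ℕ) :
    Set.InjOn (revDigits b d) (Set.Iio (b ^ d)) := by
  induction d with
  | zero => intro n hn n' hn' _; simp_all
  | succ d ih =>
    intro n hn n' hn' h
    simp only [Set.mem_Iio, pow_succ, ← Nat.div_lt_iff_lt_mul hb] at hn hn'
    have hpow : 0 < b ^ d := pow_pos hb d
    have hdiv (n : ℕ) : revDigits b (d + 1) n / b ^ d = n % b := by
      rw [revDigits, Nat.mul_comm, Nat.mul_add_div hpow, Nat.div_eq_of_lt (revDigits_lt hb _ _),
        add_zero]
    have hmod (n : ℕ) : revDigits b (d + 1) n % b ^ d = revDigits b d (n / b) := by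
      rw [revDigits, Nat.mul_add_mod_self_right, Nat.mod_eq_of_lt (revDigits_lt hb _ _)]
    have hlow : n % b = n' % b := by rw [← hdiv, h, hdiv]
    have hhigh : n / b = n' / b := ih hn hn' (by rw [← hmod, h, hmod])
    rw [← Nat.div_add_mod n b, ← Nat.div_add_mod n' b, hlow, hhigh]

theorem existsUnique_revDigits_eq (hb : 0 < b) {d a : ℕ} (ha : a < b ^ d) :
    ∃! c, c < b ^ d ∧ revDigits b d c = a := by
  have hsurj := Finset.surjOn_of_injOn_of_card_le (s := Finset.range (b ^ d))
    (t := Finset.range (b ^ d)) (revDigits b d)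
    (fun n _ => Finset.mem_coe.2 (Finset.mem_range.2 (revDigits_lt hb d n)))
    (by simpa [Set.InjOn] using revDigits_injOn hb d) le_rfl
  obtain ⟨c, hc, rfl⟩ := hsurj (by simpa using ha)
  simp only [Finset.coe_range, Set.mem_Iio] at hc
  exact ⟨c, ⟨hc, rfl⟩, fun c' ⟨hc', h⟩ => revDigits_injOn hb d hc' hc h⟩

end revDigits

section digit

variable {b : ℕ}

theorem digit_succ (n k : ℕ) : digit b n (k + 1) = digit b (n / b) k := by
  rw [digit, digit, Nat.div_div_eq_div_mul, pow_succ']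

theorem digit_add (n d k : ℕ) : digit b n (d + k) = digit b (n / b ^ d) k := by
  rw [digit, digit, Nat.div_div_eq_div_mul, pow_add]

theorem digit_mod_pow {d k : ℕ} (hk : k < d) (n : ℕ) :
    digit b (n % b ^ d) k = digit b n k := by
  have hdigit (x : ℕ) : digit b x k = x % b ^ (k + 1) / b ^ k := by
    rw [digit, pow_succ, Nat.mod_mul_right_div_self]
  rw [hdigit, hdigit, Nat.mod_mod_of_dvd n (pow_dvd_pow b hk)]

theorem digit_eq_zero_of_lt {n k : ℕ} (h : n < b ^ k) : digit b n k = 0 := by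
  rw [digit, Nat.div_eq_of_lt h, Nat.zero_mod]

theorem sum_digit_div_pow_eq_revDigits (hb : 0 < b) (d n : ℕ) :
    ∑ k ∈ Finset.range d, (digit b n k : ℝ) / (b : ℝ) ^ (k + 1) =
      (revDigits b d n : ℝ) / (b : ℝ) ^ d := by
  induction d generalizing n with
  | zero => simp [revDigits]
  | succ d ih =>
    have hb' : (b : ℝ) ≠ 0 := by positivity
    have hshift (k : ℕ) : (digit b n (k + 1) : ℝ) / (b : ℝ) ^ (k + 1 + 1) =
        (digit b (n / b) k : ℝ) / (b : ℝ) ^ (k + 1) / b := by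
      rw [digit_succ, div_div, ← pow_succ]
    rw [Finset.sum_range_succ', Finset.sum_congr rfl fun k _ => hshift k, ← Finset.sum_div, ih,
      revDigits, digit, pow_zero, Nat.div_one]
    push_cast
    field_simp
    ring

theorem revDigits_mod_pow (hb : 0 < b) (d n : ℕ) :
    revDigits b d (n % b ^ d) = revDigits b d n := by
  have h := sum_digit_div_pow_eq_revDigits hb d (n % b ^ d)
  rw [Finset.sum_congr rfl fun k hk => by rw [digit_mod_pow (Finset.mem_range.1 hk)],
    sum_digit_div_pow_eq_revDigits hb, div_left_inj' (by positivity)] at h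
  exact_mod_cast h.symm

end digit

section radInv

variable {b : ℕ}

theorem radInv_eq_sum (hb : 0 < b) {n K : ℕ} (h : n < b ^ K) :
    radInv b n = ∑ k ∈ Finset.range K, (digit b n k : ℝ) / (b : ℝ) ^ (k + 1) :=
  tsum_eq_sum fun k hk => by
    rw [digit_eq_zero_of_lt (h.trans_le (Nat.pow_le_pow_right hb (by simpa using hk))),
      Nat.cast_zero, zero_div]

theorem radInv_eq_revDigits_div (hb : 2 ≤ b) (n : ℕ) :
    radInv b n = (revDigits b n n : ℝ) / (b : ℝ) ^ n := by
  rw [radInv_eq_sum (by omega) (Nat.lt_pow_self hb), sum_digit_div_pow_eq_revDigits (by omega)]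

theorem radInv_nonneg (n : ℕ) : 0 ≤ radInv b n :=
  tsum_nonneg fun _ => by positivity

theorem radInv_lt_one (hb : 2 ≤ b) (n : ℕ) : radInv b n < 1 := by
  rw [radInv_eq_revDigits_div hb, div_lt_one (by positivity)]
  exact_mod_cast revDigits_lt (by omega) n n

theorem radInv_mul_pow (hb : 2 ≤ b) (d n : ℕ) :
    radInv b n * (b : ℝ) ^ d = revDigits b d n + radInv b (n / b ^ d) := by
  have hb0 : 0 < b := by omega
  have hn : n < b ^ (d + n) := (Nat.lt_pow_self hb).trans_le (Nat.pow_le_pow_right hb0 (by omega))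
  have hq : n / b ^ d < b ^ n := (Nat.div_le_self _ _).trans_lt (Nat.lt_pow_self hb)
  rw [radInv_eq_sum hb0 hn, radInv_eq_sum hb0 hq, Finset.sum_range_add, add_mul,
    sum_digit_div_pow_eq_revDigits hb0, div_mul_cancel₀ _ (by positivity), Finset.sum_mul]
  congr 1
  refine Finset.sum_congr rfl fun k _ => ?_
  rw [digit_add, add_assoc, pow_add, ← div_div, div_right_comm, div_mul_cancel₀ _ (by positivity)]

theorem floor_radInv_mul_pow (hb : 2 ≤ b) (d n : ℕ) :
    ⌊radInv b n * (b : ℝ) ^ d⌋₊ = revDigits b d n := by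
  rw [radInv_mul_pow hb, add_comm, Nat.floor_add_natCast (radInv_nonneg _),
    Nat.floor_eq_zero.2 (radInv_lt_one hb _), zero_add]

end radInv

theorem existsUnique_div_pow_eq_and_revDigits_eq {b d a : ℕ} (hb : 0 < b) (ha : a < b ^ d)
    (q : ℕ) : ∃! n, n / b ^ d = q ∧ revDigits b d n = a := by
  obtain ⟨c, ⟨hc, hca⟩, hc_unique⟩ := existsUnique_revDigits_eq hb ha
  have hpow : 0 < b ^ d := pow_pos hb d
  refine ⟨q * b ^ d + c, ⟨?_, ?_⟩, fun n ⟨hnq, hna⟩ => ?_⟩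
  · rw [add_comm, Nat.add_mul_div_right _ _ hpow, Nat.div_eq_of_lt hc, zero_add]
  · rw [← revDigits_mod_pow hb, add_comm, Nat.add_mul_mod_self_right, Nat.mod_eq_of_lt hc, hca]
  · have hnc : n % b ^ d = c :=
      hc_unique _ ⟨Nat.mod_lt _ hpow, by rw [revDigits_mod_pow hb, hna]⟩
    rw [← Nat.div_add_mod' n (b ^ d), hnq, hnc]

theorem floor_div_pow_add_mul_pow {b : ℕ} (hb : 0 < b) (n d e : ℕ) :
    ⌊(n : ℝ) / (b : ℝ) ^ (d + e) * (b : ℝ) ^ e⌋₊ = n / b ^ d := by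
  rw [pow_add, ← div_div, div_mul_cancel₀ _ (by positivity)]
  exact_mod_cast Nat.floor_div_eq_div (K := ℝ) n (b ^ d)

theorem stmt2 (b m : ℕ) (hb : 2 ≤ b) (d1 d2 a1 a2 : ℕ)
    (hd : d1 + d2 = m) (ha1 : a1 < b ^ d1) (ha2 : a2 < b ^ d2) :
    (((Finset.range (b ^ m)).filter (fun n =>
        ((a1 : ℝ) / (b : ℝ) ^ d1 ≤ radInv b n ∧ radInv b n < ((a1 : ℝ) + 1) / (b : ℝ) ^ d1) ∧
        ((a2 : ℝ) / (b : ℝ) ^ d2 ≤ (n : ℝ) / (b : ℝ) ^ m ∧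
          (n : ℝ) / (b : ℝ) ^ m < ((a2 : ℝ) + 1) / (b : ℝ) ^ d2))).card : ℕ) = 1 := by
  subst hd
  have hb0 : 0 < b := by omega
  have hbox (n : ℕ) :
      (((a1 : ℝ) / (b : ℝ) ^ d1 ≤ radInv b n ∧ radInv b n < ((a1 : ℝ) + 1) / (b : ℝ) ^ d1) ∧
        ((a2 : ℝ) / (b : ℝ) ^ d2 ≤ (n : ℝ) / (b : ℝ) ^ (d1 + d2) ∧
          (n : ℝ) / (b : ℝ) ^ (d1 + d2) < ((a2 : ℝ) + 1) / (b : ℝ) ^ d2)) ↔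
        n / b ^ d1 = a2 ∧ revDigits b d1 n = a1 := by
    rw [le_div_and_lt_div_iff_floor_mul_eq (radInv_nonneg n) (by positivity),
      le_div_and_lt_div_iff_floor_mul_eq (by positivity) (by positivity),
      floor_radInv_mul_pow hb, floor_div_pow_add_mul_pow hb0, and_comm]
  simp only [hbox]
  obtain ⟨N, ⟨hNq, hNa⟩, hN_unique⟩ := existsUnique_div_pow_eq_and_revDigits_eq hb0 ha1 a2
  have hN : N < b ^ (d1 + d2) := by
    rw [pow_add, mul_comm, ← Nat.div_lt_iff_lt_mul (pow_pos hb0 d1), hNq]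
    exact ha2
  refine Finset.card_eq_one.2 ⟨N, Finset.eq_singleton_iff_unique_mem.2 ⟨?_, ?_⟩⟩
  · exact Finset.mem_filter.2 ⟨Finset.mem_range.2 hN, hNq, hNa⟩
  · exact fun n hn => hN_unique n (Finset.mem_filter.1 hn).2
end
end

section
/- Let m_0 ≥ 2 be even and let β = Σ_{k=1}^{m_0/2} 2^{-(2k-1)} (i.e., binary expansion 0.101010...10 with m_0 digits). Then Σ_{u=1, u odd}^{m_0 − 1} ‖2^u β‖ = m_0/6 + (4/9)(2^{-m_0} − 1), where ‖x‖ denotes the distance from x to the nearest integer. -/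
/-!
Summing the geometric series gives `β = (2/3)(1 - 4^{-M})` with `m₀ = 2M`. For odd `u = 2j - 1`
with `1 ≤ j ≤ M`, `2^u β = (4^j - 1)/3 + (1 - 4^{j-M})/3`, where the first summand is an integer
and the second lies in `[0, 1/3]`; hence `‖2^u β‖ = (1 - 4^{j-M})/3`, and a second geometric sum
finishes the computation.
-/

noncomputable section

/-- Distance from `x` to the nearest integer. -/
def nint (x : ℝ) : ℝ := |x - round x|

open Finset

lemma nint_intCast_add (n : ℤ) (x : ℝ) : nint (n + x) = nint x := by
  simp only [nint, round_intCast_add, Int.cast_add]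
  ring_nf

lemma nint_eq_abs_of_mem_Ico {x : ℝ} (hx : x ∈ Set.Ico (-(1 / 2)) (1 / 2)) : nint x = |x| := by
  rw [nint, round_eq_zero_iff.mpr hx, Int.cast_zero, sub_zero]

lemma filter_odd_Icc_eq_image (M : ℕ) :
    (Icc 1 (2 * M - 1)).filter Odd = (Icc 1 M).image (fun j => 2 * j - 1) := by
  ext u
  simp only [mem_filter, mem_image, mem_Icc, Nat.odd_iff]
  constructor
  · rintro ⟨⟨h1, h2⟩, h3⟩
    exact ⟨(u + 1) / 2, by omega, by omega⟩
  · rintro ⟨j, ⟨hj1, hj2⟩, rfl⟩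
    exact ⟨⟨by omega, by omega⟩, by omega⟩

lemma sum_Icc_one_div_two_pow_odd (M : ℕ) :
    ∑ k ∈ Icc 1 M, (1 : ℝ) / 2 ^ (2 * k - 1) = 2 / 3 * (1 - 1 / 4 ^ M) := by
  induction M with
  | zero => simp
  | succ n ih =>
    rw [sum_Icc_succ_top (by omega), ih, show 2 * (n + 1) - 1 = 2 * n + 1 by omega,
      pow_succ, pow_mul]
    field_simp
    ring

lemma sum_Icc_four_pow_div (M : ℕ) :
    ∑ j ∈ Icc 1 M, (4 : ℝ) ^ j / 4 ^ M = 4 / 3 * (1 - 1 / 4 ^ M) := by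
  rw [← sum_div, ← Ico_add_one_right_eq_Icc, geom_sum_Ico (by norm_num) (by omega)]
  field_simp
  ring

lemma nint_two_pow_odd_mul {M j : ℕ} (hj1 : 1 ≤ j) (hjM : j ≤ M) :
    nint (2 ^ (2 * j - 1) * (2 / 3 * (1 - 1 / 4 ^ M))) = (1 - (4 : ℝ) ^ j / 4 ^ M) / 3 := by
  obtain ⟨n, hn⟩ : (3 : ℤ) ∣ 4 ^ j - 1 := by simpa using sub_dvd_pow_sub_pow (4 : ℤ) 1 j
  have hn' : (n : ℝ) = ((4 : ℝ) ^ j - 1) / 3 := by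
    have := congrArg (fun z : ℤ => (z : ℝ)) hn
    push_cast at this
    linarith
  have hsplit :
      2 ^ (2 * j - 1) * (2 / 3 * (1 - 1 / 4 ^ M)) = n + (1 - (4 : ℝ) ^ j / 4 ^ M) / 3 := by
    obtain ⟨i, rfl⟩ : ∃ i, j = i + 1 := ⟨j - 1, by omega⟩
    rw [hn', show 2 * (i + 1) - 1 = 2 * i + 1 by omega, pow_succ, pow_mul]
    field_simp
    ring
  have hratio_pos : 0 < (4 : ℝ) ^ j / 4 ^ M := by positivity
  have hratio_le : (4 : ℝ) ^ j / 4 ^ M ≤ 1 :=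
    div_le_one_of_le₀ (pow_le_pow_right₀ (by norm_num) hjM) (by positivity)
  rw [hsplit, nint_intCast_add, nint_eq_abs_of_mem_Ico ⟨by linarith, by linarith⟩,
    abs_of_nonneg (by linarith)]

theorem stmt6_general (m0 : ℕ) (he : Even m0) (β : ℝ)
    (hβ : β = ∑ k ∈ Finset.Icc 1 (m0 / 2), (1 : ℝ) / 2 ^ (2 * k - 1)) :
    ∑ u ∈ (Finset.Icc 1 (m0 - 1)).filter (fun u => Odd u), nint (2 ^ u * β)
      = (m0 : ℝ) / 6 + (4 / 9) * (1 / 2 ^ m0 - 1) := by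
  obtain ⟨M, rfl⟩ := he
  rw [← two_mul] at hβ ⊢
  rw [Nat.mul_div_cancel_left M two_pos, sum_Icc_one_div_two_pow_odd] at hβ
  rw [filter_odd_Icc_eq_image, sum_image fun a ha b hb h => by
    simp only [coe_Icc, Set.mem_Icc] at ha hb h; omega]
  have hterm : ∀ j ∈ Icc 1 M, nint (2 ^ (2 * j - 1) * β) = (1 - (4 : ℝ) ^ j / 4 ^ M) / 3 :=
    fun j hj => hβ ▸ nint_two_pow_odd_mul (mem_Icc.mp hj).1 (mem_Icc.mp hj).2
  rw [sum_congr rfl hterm, ← sum_div, sum_sub_distrib, sum_const, Nat.card_Icc,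
    sum_Icc_four_pow_div, pow_mul]
  push_cast
  ring

theorem stmt6 (m0 : ℕ) (h2 : 2 ≤ m0) (he : Even m0) (β : ℝ)
    (hβ : β = ∑ k ∈ Finset.Icc 1 (m0 / 2), (1 : ℝ) / 2 ^ (2 * k - 1)) :
    ∑ u ∈ (Finset.Icc 1 (m0 - 1)).filter (fun u => Odd u), nint (2 ^ u * β)
      = (m0 : ℝ) / 6 + (4 / 9) * (1 / 2 ^ m0 - 1) :=
  stmt6_general m0 he β hβ
end
end

section
/- For every m ≥ 1 and every n with 1 ≤ n ≤ 2^m, the local discrepancy of the first n points of the binary van der Corput sequence satisfies Δ([0,α), n, S_2^{id}) ≥ 0 for all α ∈ [0,1], i.e., D^−(n, S_2^{id}) = 0 and hence D*(n, S_2^{id}) = D(n, S_2^{id}). -/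
noncomputable section

/-- Local discrepancy `Δ([0,α), N, x) = A([0,α), N, x) − N·α` for points in `[0,1)`. -/
def locDisc (N : ℕ) (x : ℕ → ℝ) (α : ℝ) : ℝ :=
  (((Finset.range N).filter (fun n => x n < α)).card : ℝ) - N * α

def Dplus (N : ℕ) (x : ℕ → ℝ) : ℝ :=
  ⨆ α : {a : ℝ // 0 ≤ a ∧ a ≤ 1}, locDisc N x α.1

def Dminus (N : ℕ) (x : ℕ → ℝ) : ℝ :=
  ⨆ α : {a : ℝ // 0 ≤ a ∧ a ≤ 1}, -locDisc N x α.1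

def Dstar (N : ℕ) (x : ℕ → ℝ) : ℝ :=
  ⨆ α : {a : ℝ // 0 ≤ a ∧ a ≤ 1}, |locDisc N x α.1|

/-- Extreme discrepancy: sup over all subintervals `[α,β) ⊆ [0,1)`. -/
def Dext (N : ℕ) (x : ℕ → ℝ) : ℝ :=
  ⨆ p : {q : ℝ × ℝ // 0 ≤ q.1 ∧ q.1 ≤ q.2 ∧ q.2 ≤ 1},
    |(((Finset.range N).filter (fun n => p.1.1 ≤ x n ∧ x n < p.1.2)).card : ℝ)
      - N * (p.1.2 - p.1.1)|

lemma digit_two_le (n k : ℕ) : digit 2 n k ≤ 1 :=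
  Nat.lt_succ_iff.mp (Nat.mod_lt _ two_pos)

lemma summable_aux (n : ℕ) :
    Summable (fun k : ℕ => (digit 2 n k : ℝ) / (2:ℝ) ^ (k + 1)) := by
  have hg : Summable (fun k : ℕ => (1/2:ℝ) * (1/2)^k) :=
    summable_geometric_two.mul_left _
  refine Summable.of_nonneg_of_le (fun k => by positivity) (fun k => ?_) hg
  have h' : (digit 2 n k : ℝ) ≤ 1 := by exact_mod_cast digit_two_le n k
  rw [div_le_iff₀ (by positivity)]
  have heq : ((1:ℝ)/2) * (1/2)^k * 2^(k+1) = 1 := by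
    rw [div_pow, one_pow, pow_succ]
    field_simp
  calc (digit 2 n k : ℝ) ≤ 1 := h'
    _ ≤ (1/2) * (1/2)^k * 2^(k+1) := by rw [heq]

lemma radInv_two_nonneg (n : ℕ) : 0 ≤ radInv 2 n :=
  tsum_nonneg (fun k => by positivity)

lemma radInv_two_zero : radInv 2 0 = 0 := by
  simp [radInv, digit]

lemma digit_two_even (i k : ℕ) : digit 2 (2*i) (k+1) = digit 2 i k := by
  unfold digit
  rw [pow_succ', Nat.mul_div_mul_left _ _ (by norm_num)]

lemma digit_two_odd (i k : ℕ) : digit 2 (2*i+1) (k+1) = digit 2 i k := by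
  unfold digit
  rw [pow_succ']
  congr 1
  rw [← Nat.div_div_eq_div_mul]
  congr 1
  omega

lemma radInv_cast2 : ((2:ℕ):ℝ) = (2:ℝ) := by norm_num

lemma radInv_two_even (i : ℕ) : radInv 2 (2*i) = radInv 2 i / 2 := by
  have hs : Summable (fun k : ℕ => (digit 2 (2*i) k : ℝ) / ((2:ℕ):ℝ) ^ (k + 1)) := by
    rw [radInv_cast2]; exact summable_aux (2*i)
  rw [radInv, Summable.tsum_eq_zero_add hs]
  have h0 : (digit 2 (2*i) 0 : ℝ) = 0 := by
    simp [digit, Nat.mul_mod_right]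
  rw [h0, zero_div, zero_add, radInv, ← tsum_div_const]
  congr 1
  ext k
  rw [digit_two_even, radInv_cast2, div_div]
  ring_nf

lemma radInv_two_odd (i : ℕ) : radInv 2 (2*i+1) = 1/2 + radInv 2 i / 2 := by
  have hs : Summable (fun k : ℕ => (digit 2 (2*i+1) k : ℝ) / ((2:ℕ):ℝ) ^ (k + 1)) := by
    rw [radInv_cast2]; exact summable_aux (2*i+1)
  rw [radInv, Summable.tsum_eq_zero_add hs]
  have h0 : (digit 2 (2*i+1) 0 : ℝ) = 1 := by
    norm_cast
    simp [digit, Nat.mul_add_mod]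
  rw [h0, radInv_cast2]
  norm_num
  rw [radInv, ← tsum_div_const]
  congr 1
  ext k
  rw [digit_two_odd, radInv_cast2, div_div]
  ring_nf

lemma radInv_two_lt_one : ∀ n, radInv 2 n < 1 := by
  intro n
  induction n using Nat.strong_induction_on with
  | _ n ih =>
    rcases Nat.eq_zero_or_pos n with h | h
    · rw [h, radInv_two_zero]; norm_num
    · rcases Nat.even_or_odd n with ⟨i, hi⟩ | ⟨i, hi⟩
      · have hn : n = 2*i := by omega
        have hlt : i < n := by omega
        rw [hn, radInv_two_even]
        have := ih i hlt
        linarith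
      · have hn : n = 2*i+1 := by omega
        have hlt : i < n := by omega
        rw [hn, radInv_two_odd]
        have := ih i hlt
        linarith

lemma sum_range_parity (g : ℕ → ℝ) (n : ℕ) :
    ∑ j ∈ Finset.range n, g j =
      ∑ i ∈ Finset.range ((n+1)/2), g (2*i) + ∑ i ∈ Finset.range (n/2), g (2*i+1) := by
  induction n with
  | zero => simp
  | succ n ih =>
    rw [Finset.sum_range_succ, ih]
    rcases Nat.even_or_odd n with ⟨i, hi⟩ | ⟨i, hi⟩
    · have e1 : (n+1+1)/2 = (n+1)/2 + 1 := by omega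
      have e2 : (n+1)/2 = n/2 := by omega
      have e3 : n = 2 * (n/2) := by omega
      rw [e1, Finset.sum_range_succ, e2]
      rw [← e3]
      ring
    · have e1 : (n+1)/2 = n/2 + 1 := by omega
      have e2 : (n+1+1)/2 = (n+1)/2 := by omega
      have e4 : g n = g (2*(n/2)+1) := by congr 1; omega
      rw [e2, e1, e4, Finset.sum_range_succ (fun i => g (2*i+1)) (n/2)]
      ring

lemma card_filter_real (p : ℕ → Prop) [DecidablePred p] (n : ℕ) :
    (((Finset.range n).filter p).card : ℝ) = ∑ j ∈ Finset.range n, if p j then (1:ℝ) else 0 := by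
  rw [Finset.sum_boole]

lemma locDisc_radInv_nonneg : ∀ n, ∀ α : ℝ, 0 ≤ α → α ≤ 1 → 0 ≤ locDisc n (radInv 2) α := by
  intro n
  induction n using Nat.strong_induction_on with
  | _ n ih =>
  intro α h0 h1
  rcases Nat.lt_or_ge n 2 with hn2 | hn2
  · interval_cases n
    · simp [locDisc]
    · rw [locDisc]
      have hf : (Finset.range 1).filter (fun j => radInv 2 j < α)
          = if (0:ℝ) < α then {0} else ∅ := by
        rw [Finset.range_one, Finset.filter_singleton]
        simp [radInv_two_zero]
      rw [hf]
      split_ifs with h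
      · simp only [Finset.card_singleton, Nat.cast_one]
        push_cast
        linarith
      · push_neg at h
        have : α = 0 := le_antisymm h h0
        simp [this]
  · have hcard : (((Finset.range n).filter (fun j => radInv 2 j < α)).card : ℝ) =
        (((Finset.range ((n+1)/2)).filter (fun i => radInv 2 i < 2*α)).card : ℝ)
        + (((Finset.range (n/2)).filter (fun i => radInv 2 i < 2*α - 1)).card : ℝ) := by
      rw [card_filter_real, card_filter_real, card_filter_real,
        sum_range_parity (fun j => if radInv 2 j < α then (1:ℝ) else 0) n]
      congr 1
      · refine Finset.sum_congr rfl (fun i _ => ?_)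
        have hiff : radInv 2 (2*i) < α ↔ radInv 2 i < 2*α := by
          rw [radInv_two_even]; constructor <;> intro <;> linarith
        exact if_congr hiff rfl rfl
      · refine Finset.sum_congr rfl (fun i _ => ?_)
        have hiff : radInv 2 (2*i+1) < α ↔ radInv 2 i < 2*α - 1 := by
          rw [radInv_two_odd]; constructor <;> intro <;> linarith
        exact if_congr hiff rfl rfl
    rw [locDisc, hcard]
    rcases le_or_gt α (1/2) with ha | ha
    · -- α ≤ 1/2 : odd part empty
      have hodd : (Finset.range (n/2)).filter (fun i => radInv 2 i < 2*α - 1) = ∅ := by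
        refine Finset.filter_eq_empty_iff.mpr (fun i _ => ?_)
        have := radInv_two_nonneg i
        intro hc; linarith
      rw [hodd]
      have hm : (n+1)/2 < n := by omega
      have hIH := ih _ hm (2*α) (by linarith) (by linarith)
      rw [locDisc] at hIH
      have h2m : (n:ℝ) ≤ 2*(((n+1)/2 : ℕ):ℝ) := by
        have : n ≤ 2*((n+1)/2) := by omega
        exact_mod_cast this
      have hkey : (n:ℝ)*α ≤ 2*(((n+1)/2 : ℕ):ℝ)*α := mul_le_mul_of_nonneg_right h2m h0
      simp only [Finset.card_empty, Nat.cast_zero, add_zero]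
      linarith
    · -- α > 1/2 : even part full
      have heven : (Finset.range ((n+1)/2)).filter (fun i => radInv 2 i < 2*α)
          = Finset.range ((n+1)/2) := by
        refine Finset.filter_true_of_mem (fun i _ => ?_)
        have := radInv_two_lt_one i
        linarith
      rw [heven, Finset.card_range]
      have hm : n/2 < n := by omega
      have hIH := ih _ hm (2*α - 1) (by linarith) (by linarith)
      rw [locDisc] at hIH
      have hab : ((((n+1)/2 : ℕ)):ℝ) + (((n/2 : ℕ)):ℝ) = (n:ℝ) := by
        have : (n+1)/2 + n/2 = n := by omega
        exact_mod_cast this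
      have hba : (((n/2 : ℕ)):ℝ) ≤ ((((n+1)/2 : ℕ)):ℝ) := by
        have : n/2 ≤ (n+1)/2 := by omega
        exact_mod_cast this
      nlinarith [mul_nonneg (sub_nonneg.mpr hba) (sub_nonneg.mpr h1)]

theorem stmt17 (m n : ℕ) (hm : 1 ≤ m) (h1 : 1 ≤ n) (h2 : n ≤ 2 ^ m) :
    (∀ α : ℝ, 0 ≤ α → α ≤ 1 → 0 ≤ locDisc n (radInv 2) α) ∧
      Dminus n (radInv 2) = 0 ∧
      Dstar n (radInv 2) = Dext n (radInv 2) := by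
  have hΔ := locDisc_radInv_nonneg n
  haveI hne1 : Nonempty {a : ℝ // 0 ≤ a ∧ a ≤ 1} := ⟨⟨0, le_refl 0, zero_le_one⟩⟩
  haveI hne2 : Nonempty {q : ℝ × ℝ // 0 ≤ q.1 ∧ q.1 ≤ q.2 ∧ q.2 ≤ 1} :=
    ⟨⟨(0, 0), le_refl 0, le_refl 0, zero_le_one⟩⟩
  -- locDisc at 0 is 0
  have h00 : locDisc n (radInv 2) 0 = 0 := by
    rw [locDisc]
    have : (Finset.range n).filter (fun j => radInv 2 j < (0:ℝ)) = ∅ :=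
      Finset.filter_eq_empty_iff.mpr
        (fun j _ => not_lt.mpr (radInv_two_nonneg j))
    rw [this]; simp
  -- generic bound for locDisc terms
  have habs : ∀ α : ℝ, 0 ≤ α → α ≤ 1 → |locDisc n (radInv 2) α| ≤ n := by
    intro α ha0 ha1
    rw [locDisc, abs_le]
    have hc1 : (((Finset.range n).filter (fun j => radInv 2 j < α)).card : ℝ) ≤ n := by
      have := Finset.card_filter_le (Finset.range n) (fun j => radInv 2 j < α)
      rw [Finset.card_range] at this
      exact_mod_cast this
    have hc0 : (0:ℝ) ≤ (((Finset.range n).filter (fun j => radInv 2 j < α)).card : ℝ) := by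
      positivity
    have hna : (0:ℝ) ≤ n*α := by positivity
    have hna1 : (n:ℝ)*α ≤ n := by
      calc (n:ℝ)*α ≤ n*1 := by
            exact mul_le_mul_of_nonneg_left ha1 (by positivity)
        _ = n := mul_one _
    constructor <;> linarith
  -- Dminus = 0
  have hDminus : Dminus n (radInv 2) = 0 := by
    rw [Dminus]
    apply le_antisymm
    · refine ciSup_le (fun α => ?_)
      exact neg_nonpos.mpr (hΔ α.1 α.2.1 α.2.2)
    · have hb : BddAbove (Set.range fun α : {a : ℝ // 0 ≤ a ∧ a ≤ 1} =>
          -locDisc n (radInv 2) α.1) := by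
        refine ⟨0, ?_⟩
        rintro _ ⟨α, rfl⟩
        exact neg_nonpos.mpr (hΔ α.1 α.2.1 α.2.2)
      have := le_ciSup hb (⟨0, le_refl 0, zero_le_one⟩ : {a : ℝ // 0 ≤ a ∧ a ≤ 1})
      simpa [h00] using this
  refine ⟨hΔ, hDminus, ?_⟩
  -- bounded above facts
  have hbStar : BddAbove (Set.range fun α : {a : ℝ // 0 ≤ a ∧ a ≤ 1} =>
      |locDisc n (radInv 2) α.1|) := by
    refine ⟨n, ?_⟩
    rintro _ ⟨α, rfl⟩
    exact habs α.1 α.2.1 α.2.2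
  have hbExt : BddAbove (Set.range fun p : {q : ℝ × ℝ // 0 ≤ q.1 ∧ q.1 ≤ q.2 ∧ q.2 ≤ 1} =>
      |(((Finset.range n).filter (fun j => p.1.1 ≤ radInv 2 j ∧ radInv 2 j < p.1.2)).card : ℝ)
        - n * (p.1.2 - p.1.1)|) := by
    refine ⟨2*n, ?_⟩
    rintro _ ⟨⟨⟨a, b⟩, ha0, hab, hb1⟩, rfl⟩
    have ha0' : (0:ℝ) ≤ a := ha0
    have hab' : a ≤ b := hab
    have hb1' : b ≤ 1 := hb1
    rw [abs_le]
    have hc1 : (((Finset.range n).filter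
        (fun j => a ≤ radInv 2 j ∧ radInv 2 j < b)).card : ℝ) ≤ n := by
      have := Finset.card_filter_le (Finset.range n)
        (fun j => a ≤ radInv 2 j ∧ radInv 2 j < b)
      rw [Finset.card_range] at this
      exact_mod_cast this
    have hc0 : (0:ℝ) ≤ (((Finset.range n).filter
        (fun j => a ≤ radInv 2 j ∧ radInv 2 j < b)).card : ℝ) := by positivity
    have h01 : (0:ℝ) ≤ b - a := by linarith
    have h02 : b - a ≤ 1 := by linarith
    have h03 : (0:ℝ) ≤ (n:ℝ)*(b-a) := by positivity
    have h04 : (n:ℝ)*(b-a) ≤ n := by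
      calc (n:ℝ)*(b-a) ≤ n*1 := mul_le_mul_of_nonneg_left h02 (by positivity)
        _ = n := mul_one _
    constructor <;> linarith
  -- card split identity
  have hsplit : ∀ a b : ℝ, a ≤ b →
      (((Finset.range n).filter (fun j => a ≤ radInv 2 j ∧ radInv 2 j < b)).card : ℝ)
      = (((Finset.range n).filter (fun j => radInv 2 j < b)).card : ℝ)
        - (((Finset.range n).filter (fun j => radInv 2 j < a)).card : ℝ) := by
    intro a b hab
    have hu : (Finset.range n).filter (fun j => radInv 2 j < b)
        = (Finset.range n).filter (fun j => radInv 2 j < a)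
          ∪ (Finset.range n).filter (fun j => a ≤ radInv 2 j ∧ radInv 2 j < b) := by
      ext j
      simp only [Finset.mem_union, Finset.mem_filter]
      constructor
      · rintro ⟨hj, hb⟩
        rcases lt_or_ge (radInv 2 j) a with h | h
        · exact Or.inl ⟨hj, h⟩
        · exact Or.inr ⟨hj, h, hb⟩
      · rintro (⟨hj, h⟩ | ⟨hj, h⟩)
        · exact ⟨hj, lt_of_lt_of_le h hab⟩
        · exact ⟨hj, h.2⟩
    have hd : Disjoint ((Finset.range n).filter (fun j => radInv 2 j < a))
        ((Finset.range n).filter (fun j => a ≤ radInv 2 j ∧ radInv 2 j < b)) := by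
      rw [Finset.disjoint_left]
      intro j hj1 hj2
      simp only [Finset.mem_filter] at hj1 hj2
      exact absurd hj2.2.1 (not_le.mpr hj1.2)
    have := Finset.card_union_of_disjoint hd
    rw [← hu] at this
    have : ((((Finset.range n).filter (fun j => radInv 2 j < b)).card : ℝ))
        = (((Finset.range n).filter (fun j => radInv 2 j < a)).card : ℝ)
          + (((Finset.range n).filter (fun j => a ≤ radInv 2 j ∧ radInv 2 j < b)).card : ℝ) := by
      exact_mod_cast this
    linarith
  apply le_antisymm
  · -- Dstar ≤ Dext
    rw [Dstar, Dext]
    refine ciSup_le (fun α => ?_)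
    obtain ⟨a, ha0, ha1⟩ := α
    have hfe : (Finset.range n).filter (fun j => (0:ℝ) ≤ radInv 2 j ∧ radInv 2 j < a)
        = (Finset.range n).filter (fun j => radInv 2 j < a) := by
      ext j
      simp only [Finset.mem_filter]
      exact ⟨fun h => ⟨h.1, h.2.2⟩, fun h => ⟨h.1, radInv_two_nonneg j, h.2⟩⟩
    have key : |locDisc n (radInv 2) a|
        = |(((Finset.range n).filter
            (fun j => (0:ℝ) ≤ radInv 2 j ∧ radInv 2 j < a)).card : ℝ) - n * (a - 0)| := by
      rw [locDisc, hfe]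
      norm_num
    rw [key]
    exact le_ciSup hbExt (⟨(0, a), le_refl 0, ha0, ha1⟩ :
      {q : ℝ × ℝ // 0 ≤ q.1 ∧ q.1 ≤ q.2 ∧ q.2 ≤ 1})
  · -- Dext ≤ Dstar
    rw [Dstar, Dext]
    refine ciSup_le (fun p => ?_)
    obtain ⟨⟨a, b⟩, ha0, hab, hb1⟩ := p
    simp only
    have hb0 : (0:ℝ) ≤ b := le_trans ha0 hab
    have ha1 : a ≤ 1 := le_trans hab hb1
    rw [hsplit a b hab]
    have hΔa := hΔ a ha0 ha1
    have hΔb := hΔ b hb0 hb1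
    have hterm : |(((Finset.range n).filter (fun j => radInv 2 j < b)).card : ℝ)
        - (((Finset.range n).filter (fun j => radInv 2 j < a)).card : ℝ) - n * (b - a)|
        = |locDisc n (radInv 2) b - locDisc n (radInv 2) a| := by
      rw [locDisc, locDisc]
      ring_nf
    rw [hterm]
    have hmax : |locDisc n (radInv 2) b - locDisc n (radInv 2) a|
        ≤ max |locDisc n (radInv 2) b| |locDisc n (radInv 2) a| := by
      rw [abs_le, abs_of_nonneg hΔb, abs_of_nonneg hΔa]
      constructor
      · have := le_max_right (locDisc n (radInv 2) b) (locDisc n (radInv 2) a)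
        linarith
      · have := le_max_left (locDisc n (radInv 2) b) (locDisc n (radInv 2) a)
        linarith
    refine le_trans hmax (max_le ?_ ?_)
    · exact le_ciSup hbStar (⟨b, hb0, hb1⟩ : {a : ℝ // 0 ≤ a ∧ a ≤ 1})
    · exact le_ciSup hbStar (⟨a, ha0, ha1⟩ : {a : ℝ // 0 ≤ a ∧ a ≤ 1})
end
end

section
/- Let b ≥ 2 and let τ ∈ S_b be the permutation τ(i) = b − 1 − i. Then for the swapped φ-functions one has ψ_b^{τ,+} = ψ_b^{id,−} and ψ_b^{τ,−} = ψ_b^{id,+}, i.e., for all x ∈ [0,1], max_{0≤h<b} φ_{b,h}^{τ}(x) = max_{0≤h<b} (−φ_{b,h}^{id}(x)) and max_{0≤h<b} (−φ_{b,h}^{τ}(x)) = max_{0≤h<b} φ_{b,h}^{id}(x). -/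
/-!
For `τ(i) = b − 1 − i` one has `A([0,h/b); k; Z^τ) = A([(b−h)/b,1); k; Z^id)` and
`A([h/b,1); k; Z^τ) = A([0,(b−h)/b); k; Z^id)`, and the branch condition `h ≤ τ(k−1)` of
`φ^τ_h` is the negation of the branch condition `b − h ≤ k − 1` of `φ^id_{b−h}`. Hence
`φ^τ_h = −φ^id_{b−h}` for `0 < h < b`, while `φ_0 = 0`. As `h ↦ −h mod b` permutes `Fin b`,
the maxima over `h` agree.
-/

noncomputable section

/-- `A([0,h/b); k; Z_b^σ)`: number of `j < k` with `σ j < h`. -/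
def countLt (σ : ℕ → ℕ) (k h : ℕ) : ℕ := ((Finset.range k).filter (fun j => σ j < h)).card

/-- `A([h/b,1); k; Z_b^σ)`: number of `j < k` with `σ j ≥ h`. -/
def countGe (σ : ℕ → ℕ) (k h : ℕ) : ℕ := ((Finset.range k).filter (fun j => h ≤ σ j)).card

/-- The function `φ_{b,h}^σ`, extended `1`-periodically to all of `ℝ`: on `[(k−1)/b, k/b)`
it equals `A([0,h/b);k;Z_b^σ) − h·x` if `h ≤ σ(k−1)`, and
`(b−h)·x − A([h/b,1);k;Z_b^σ)` otherwise. -/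
def phiPerm (b : ℕ) (σ : ℕ → ℕ) (h : ℕ) (x : ℝ) : ℝ :=
  let y := Int.fract x
  let k1 := (⌊(b : ℝ) * y⌋).toNat
  if h ≤ σ k1 then (countLt σ (k1 + 1) h : ℝ) - h * y
  else ((b : ℝ) - h) * y - (countGe σ (k1 + 1) h : ℝ)

def psiPlus (b : ℕ) (σ : ℕ → ℕ) (x : ℝ) : ℝ := ⨆ h : Fin b, phiPerm b σ h x

def psiMinus (b : ℕ) (σ : ℕ → ℕ) (x : ℝ) : ℝ := ⨆ h : Fin b, -phiPerm b σ h x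

def psi (b : ℕ) (σ : ℕ → ℕ) (x : ℝ) : ℝ := psiPlus b σ x + psiMinus b σ x

/-- `α_b^σ = inf_{n ≥ 1} (1/n) sup_{x ∈ [0,1]} Σ_{j=1}^n ψ_b^σ(x/b^j)`. -/
def alphaPerm (b : ℕ) (σ : ℕ → ℕ) : ℝ :=
  ⨅ n : {n : ℕ // 1 ≤ n},
    (1 / (n.1 : ℝ)) * ⨆ x : Set.Icc (0 : ℝ) 1, ∑ j ∈ Finset.Icc 1 n.1, psi b σ (x.1 / (b : ℝ) ^ j)

lemma toNat_floor_mul_fract_lt {b : ℕ} (hb : 0 < b) (x : ℝ) :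
    (⌊(b : ℝ) * Int.fract x⌋).toNat < b := by
  have hb' : (0 : ℝ) < b := by exact_mod_cast hb
  have hlt : (b : ℝ) * Int.fract x < b := by
    nlinarith [Int.fract_lt_one x, Int.fract_nonneg x]
  have : ⌊(b : ℝ) * Int.fract x⌋ < (b : ℤ) := Int.floor_lt.mpr (by exact_mod_cast hlt)
  omega

lemma countLt_reverse {b k : ℕ} (hk : k ≤ b) (h : ℕ) :
    countLt (fun i => b - 1 - i) k h = countGe id k (b - h) := by
  unfold countLt countGe
  congr 1
  refine Finset.filter_congr fun j hj => ?_
  simp only [Finset.mem_range] at hj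
  simp only [id]
  omega

lemma countGe_reverse {b k : ℕ} (hk : k ≤ b) (h : ℕ) :
    countGe (fun i => b - 1 - i) k h = countLt id k (b - h) := by
  unfold countLt countGe
  congr 1
  refine Finset.filter_congr fun j hj => ?_
  simp only [Finset.mem_range] at hj
  simp only [id]
  omega

lemma phiPerm_zero (b : ℕ) (σ : ℕ → ℕ) (x : ℝ) : phiPerm b σ 0 x = 0 := by
  simp [phiPerm, countLt]

lemma phiPerm_reverse {b h : ℕ} (h0 : 0 < h) (hb : h < b) (x : ℝ) :
    phiPerm b (fun i => b - 1 - i) h x = -phiPerm b id (b - h) x := by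
  have hk := toNat_floor_mul_fract_lt (h0.trans hb) x
  unfold phiPerm
  simp only [id]
  set y := Int.fract x
  set k := (⌊(b : ℝ) * y⌋).toNat
  have hcast : ((b - h : ℕ) : ℝ) = b - h := Nat.cast_sub hb.le
  by_cases hc : h ≤ b - 1 - k
  · rw [if_pos hc, if_neg (by omega), countLt_reverse (by omega), hcast]
    ring
  · rw [if_neg hc, if_pos (by omega), countGe_reverse (by omega), hcast]
    ring

lemma phiPerm_reverse_eq_neg_phiPerm_neg {b : ℕ} (h : Fin b) (x : ℝ) :
    phiPerm b (fun i => b - 1 - i) h x = -phiPerm b id ↑(-h) x := by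
  rw [Fin.val_neg']
  rcases Nat.eq_zero_or_pos h.val with h0 | h0
  · simp [h0, phiPerm_zero]
  · rw [Nat.mod_eq_of_lt (by omega), phiPerm_reverse h0 h.isLt]

theorem stmt19_general (b : ℕ) :
    ∀ x : ℝ,
      psiPlus b (fun i => b - 1 - i) x = psiMinus b id x ∧
        psiMinus b (fun i => b - 1 - i) x = psiPlus b id x := by
  intro x
  constructor
  · rw [psiPlus, psiMinus]
    conv_rhs => rw [← (Equiv.neg (Fin b)).iSup_comp]
    exact iSup_congr fun h => phiPerm_reverse_eq_neg_phiPerm_neg h x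
  · rw [psiPlus, psiMinus]
    conv_rhs => rw [← (Equiv.neg (Fin b)).iSup_comp]
    exact iSup_congr fun h => neg_eq_iff_eq_neg.mpr (phiPerm_reverse_eq_neg_phiPerm_neg h x)

theorem stmt19 (b : ℕ) (hb : 2 ≤ b) :
    ∀ x : ℝ,
      psiPlus b (fun i => b - 1 - i) x = psiMinus b id x ∧
        psiMinus b (fun i => b - 1 - i) x = psiPlus b id x :=
  stmt19_general b
end
end
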